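/- For t = a_1 + a_2 + a_3 and the quiver Q(a) with the metabelian relations, the path algebra modulo relations A(a) = kQ(a)/I is finite-dimensional, where I is generated by β_{b_1}α_{b_2−1}···α_{b_1} and α_{b_2−1}···α_{b_1}β_{b_1} − β_{b_2}α_{b_3−1}···α_{b_2}. -/

import Mathlib

/-- generators of the path algebra of the quiver `Q(a)`: a vertex idempotent `e i` for each
vertex `i`, the arrows `a i : i → i+1`, and the arrows `b1 : b₂ → b₁`, `b2 : b₃ → b₂`. -/
inductive PGen : Type
  | e (i : ℕ)
  | a (i : ℕ)
  | b1
  | b2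

open PGen FreeAlgebra in
/-- the (image in the free algebra of the) path `α_{u+len-1} ⋯ α_{u+1} α_u`. -/
def alphaPath (k : Type) [Field k] (u : ℕ) : ℕ → FreeAlgebra k PGen
  | 0 => 1
  | (len + 1) => ι k (a (u + len)) * alphaPath k u len

open PGen FreeAlgebra in
/-- the defining relations of `A(a) = kQ(a)/I`: the path algebra relations (vertex
idempotents `e i` for the vertices `1, …, t`, orthogonal idempotents summing to `1`,
sources and targets of the arrows; generators outside the quiver are set to `0`), together
with the two metabelian relations generating `I`. -/
inductive PRel (k : Type) [Field k] (a1 a2 a3 : ℕ) :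
    FreeAlgebra k PGen → FreeAlgebra k PGen → Prop
  | eZero (i : ℕ) : ¬ (1 ≤ i ∧ i ≤ a1 + a2 + a3) → PRel k a1 a2 a3 (ι k (e i)) 0
  | aZero (i : ℕ) : ¬ (1 ≤ i ∧ i + 1 ≤ a1 + a2 + a3) → PRel k a1 a2 a3 (ι k (a i)) 0
  | idem (i j : ℕ) :
      PRel k a1 a2 a3 (ι k (e i) * ι k (e j)) (if i = j then ι k (e i) else 0)
  | unit : PRel k a1 a2 a3 (∑ i ∈ Finset.Icc 1 (a1 + a2 + a3), ι k (e i)) 1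
  | aSrc (i : ℕ) : PRel k a1 a2 a3 (ι k (a i) * ι k (e i)) (ι k (a i))
  | aTgt (i : ℕ) : PRel k a1 a2 a3 (ι k (e (i + 1)) * ι k (a i)) (ι k (a i))
  | b1Src : PRel k a1 a2 a3 (ι k b1 * ι k (e (a1 + a2))) (ι k b1)
  | b1Tgt : PRel k a1 a2 a3 (ι k (e a1) * ι k b1) (ι k b1)
  | b2Src : PRel k a1 a2 a3 (ι k b2 * ι k (e (a1 + a2 + a3))) (ι k b2)
  | b2Tgt : PRel k a1 a2 a3 (ι k (e (a1 + a2)) * ι k b2) (ι k b2)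
  | rel1 : PRel k a1 a2 a3 (ι k b1 * alphaPath k a1 a2) 0
  | rel2 : PRel k a1 a2 a3 (alphaPath k a1 a2 * ι k b1) (ι k b2 * alphaPath k (a1 + a2) a3)

/-!
Modulo `I`, every path of `Q(a)` is `0`, or of the form `p · e_u` or `p · w · q · e_u`, where `p`
and `q` are paths of `α`'s (hence of length at most `t`) and `w` is one of `β_{b_1}`, `β_{b_2}`,
`β_{b_1} β_{b_2}`. These finitely many elements span `A(a)`: their span contains `1 = ∑ e_i`, and
it is stable under left multiplication by the generators. An `e_j` or an `α_j` only lengthens `p`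
or gives `0`, and a `β` gives `0` unless the vertices match. When they match, the product is again
of this shape, except in three cases settled by the relations: `β_{b_1} (α ⋯ α) β_{b_1} ⋯ = 0` by
the first one, `β_{b_2} (α ⋯ α) β_{b_2} = (α ⋯ α) β_{b_1} β_{b_2}` by the second, and
`β_{b_2} (α ⋯ α) β_{b_1} = 0` by both.
-/

open Set

theorem Submodule.eq_top_of_one_mem_of_mul_mem {R A : Type*} [CommSemiring R] [Semiring A]
    [Algebra R A] {s : Set A} (hs : Algebra.adjoin R s = ⊤) {M : Submodule R A}
    (h1 : (1 : A) ∈ M) (hmul : ∀ x ∈ s, ∀ y ∈ M, x * y ∈ M) : M = ⊤ := by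
  have key (a : A) : ∀ y ∈ M, a * y ∈ M := by
    have ha : a ∈ Algebra.adjoin R s := hs ▸ Algebra.mem_top
    induction ha using Algebra.adjoin_induction with
    | mem x hx => exact hmul x hx
    | algebraMap r => intro y hy; rw [← Algebra.smul_def]; exact M.smul_mem r hy
    | add x y _ _ hx hy => intro z hz; rw [add_mul]; exact add_mem (hx z hz) (hy z hz)
    | mul x y _ _ hx hy => intro z hz; rw [mul_assoc]; exact hx _ (hy z hz)
  exact eq_top_iff.2 fun a _ => by simpa using key a 1 h1

theorem Submodule.span_eq_top_of_mul_mem {R A : Type*} [CommSemiring R] [Semiring A]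
    [Algebra R A] {s S : Set A} (hs : Algebra.adjoin R s = ⊤) (h1 : (1 : A) ∈ span R S)
    (hmul : ∀ x ∈ s, ∀ y ∈ S, x * y ∈ span R S) : span R S = ⊤ :=
  eq_top_of_one_mem_of_mul_mem hs h1 fun x hx =>
    (span_le (p := (span R S).comap (LinearMap.mulLeft R x))).2 (hmul x hx)

theorem RingQuot.adjoin_range_mkAlgHom_ι {R X : Type*} [CommSemiring R]
    (r : FreeAlgebra R X → FreeAlgebra R X → Prop) :
    Algebra.adjoin R (range fun x => mkAlgHom R r (FreeAlgebra.ι R x)) = ⊤ := by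
  rw [range_comp', ← AlgHom.map_adjoin, FreeAlgebra.adjoin_range_ι, Algebra.map_top,
    AlgHom.range_eq_top]
  exact mkAlgHom_surjective R r

namespace MetabelianAlgebra

open PGen FreeAlgebra

variable {k : Type} [Field k] {a1 a2 a3 : ℕ}

local notation "𝒜" => RingQuot (PRel k a1 a2 a3)
local notation "𝐞" i:max => RingQuot.mkAlgHom k (PRel k a1 a2 a3) (ι k (e i))
local notation "𝛂" i:max => RingQuot.mkAlgHom k (PRel k a1 a2 a3) (ι k (a i))
local notation "𝐛₁" => RingQuot.mkAlgHom k (PRel k a1 a2 a3) (ι k b1)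
local notation "𝐛₂" => RingQuot.mkAlgHom k (PRel k a1 a2 a3) (ι k b2)
local notation "𝐩" u:max l:max => RingQuot.mkAlgHom k (PRel k a1 a2 a3) (alphaPath k u l)

theorem e_mul_e (i j : ℕ) : 𝐞 i * 𝐞 j = if i = j then 𝐞 i else 0 := by
  have h := RingQuot.mkAlgHom_rel k (PRel.idem (k := k) (a1 := a1) (a2 := a2) (a3 := a3) i j)
  rw [← map_mul, h]
  split_ifs <;> simp

theorem e_eq_zero {i : ℕ} (h : ¬ (1 ≤ i ∧ i ≤ a1 + a2 + a3)) : 𝐞 i = 0 := by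
  simpa using RingQuot.mkAlgHom_rel k (PRel.eZero (k := k) i h)

theorem a_eq_zero {i : ℕ} (h : ¬ (1 ≤ i ∧ i + 1 ≤ a1 + a2 + a3)) : 𝛂 i = 0 := by
  simpa using RingQuot.mkAlgHom_rel k (PRel.aZero (k := k) i h)

theorem sum_e_eq_one : ∑ i ∈ Finset.Icc 1 (a1 + a2 + a3), 𝐞 i = 1 := by
  simpa using RingQuot.mkAlgHom_rel k (PRel.unit (k := k) (a1 := a1) (a2 := a2) (a3 := a3))

theorem a_mul_e (i : ℕ) : 𝛂 i * 𝐞 i = 𝛂 i := by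
  simpa using RingQuot.mkAlgHom_rel k (PRel.aSrc (k := k) (a1 := a1) (a2 := a2) (a3 := a3) i)

theorem e_succ_mul_a (i : ℕ) : 𝐞 (i + 1) * 𝛂 i = 𝛂 i := by
  simpa using RingQuot.mkAlgHom_rel k (PRel.aTgt (k := k) (a1 := a1) (a2 := a2) (a3 := a3) i)

theorem b1_mul_e : 𝐛₁ * 𝐞 (a1 + a2) = 𝐛₁ := by
  simpa using RingQuot.mkAlgHom_rel k (PRel.b1Src (k := k) (a1 := a1) (a2 := a2) (a3 := a3))

theorem e_mul_b1 : 𝐞 a1 * 𝐛₁ = 𝐛₁ := by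
  simpa using RingQuot.mkAlgHom_rel k (PRel.b1Tgt (k := k) (a1 := a1) (a2 := a2) (a3 := a3))

theorem b2_mul_e : 𝐛₂ * 𝐞 (a1 + a2 + a3) = 𝐛₂ := by
  simpa using RingQuot.mkAlgHom_rel k (PRel.b2Src (k := k) (a1 := a1) (a2 := a2) (a3 := a3))

theorem e_mul_b2 : 𝐞 (a1 + a2) * 𝐛₂ = 𝐛₂ := by
  simpa using RingQuot.mkAlgHom_rel k (PRel.b2Tgt (k := k) (a1 := a1) (a2 := a2) (a3 := a3))

theorem b1_mul_path : 𝐛₁ * 𝐩 a1 a2 = 0 := by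
  simpa using RingQuot.mkAlgHom_rel k (PRel.rel1 (k := k) (a1 := a1) (a2 := a2) (a3 := a3))

theorem path_mul_b1 : 𝐩 a1 a2 * 𝐛₁ = 𝐛₂ * 𝐩 (a1 + a2) a3 := by
  simpa using RingQuot.mkAlgHom_rel k (PRel.rel2 (k := k) (a1 := a1) (a2 := a2) (a3 := a3))

theorem path_zero (u : ℕ) : 𝐩 u 0 = 1 := by
  rw [alphaPath, map_one]

theorem path_succ (u l : ℕ) : 𝐩 u (l + 1) = 𝛂 (u + l) * 𝐩 u l := by
  rw [alphaPath, map_mul]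

theorem path_add (u m n : ℕ) : 𝐩 u (m + n) = 𝐩 (u + n) m * 𝐩 u n := by
  induction m with
  | zero => rw [path_zero, one_mul, Nat.zero_add]
  | succ m ih =>
    rw [Nat.add_right_comm, path_succ, ih, path_succ, Nat.add_assoc u n m, Nat.add_comm n m,
      mul_assoc]

theorem e_mul_path_mul {v m : ℕ} {X : 𝒜} (hX : 𝐞 v * X = X) (j : ℕ) :
    𝐞 j * (𝐩 v m * X) = if j = v + m then 𝐩 v m * X else 0 := by
  cases m with
  | zero =>
    rw [path_zero, one_mul, Nat.add_zero, ← hX, ← mul_assoc, e_mul_e]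
    split_ifs with h
    · rw [h]
    · rw [zero_mul]
  | succ m =>
    rw [path_succ, mul_assoc, ← e_succ_mul_a, mul_assoc, ← mul_assoc (𝐞 j), e_mul_e,
      ← Nat.add_assoc]
    split_ifs with h
    · rw [h]
    · rw [zero_mul]

theorem a_mul_path_mul {v m : ℕ} {X : 𝒜} (hX : 𝐞 v * X = X) (j : ℕ) :
    𝛂 j * (𝐩 v m * X) = if j = v + m then 𝐩 v (m + 1) * X else 0 := by
  rw [← a_mul_e, mul_assoc, e_mul_path_mul hX]
  split_ifs with h
  · rw [h, path_succ, mul_assoc]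
  · rw [mul_zero]

theorem b1_mul_path_mul_of_ne {v m : ℕ} {X : 𝒜} (hX : 𝐞 v * X = X) (h : v + m ≠ a1 + a2) :
    𝐛₁ * (𝐩 v m * X) = 0 := by
  rw [← b1_mul_e, mul_assoc, e_mul_path_mul hX, if_neg (Ne.symm h), mul_zero]

theorem b2_mul_path_mul_of_ne {v m : ℕ} {X : 𝒜} (hX : 𝐞 v * X = X) (h : v + m ≠ a1 + a2 + a3) :
    𝐛₂ * (𝐩 v m * X) = 0 := by
  rw [← b2_mul_e, mul_assoc, e_mul_path_mul hX, if_neg (Ne.symm h), mul_zero]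

theorem b1_mul_path_mul_b1 (Z : 𝒜) : 𝐛₁ * (𝐩 a1 a2 * (𝐛₁ * Z)) = 0 := by
  rw [← mul_assoc, b1_mul_path, zero_mul]

theorem b2_mul_path_mul_b2 (Z : 𝒜) :
    𝐛₂ * (𝐩 (a1 + a2) a3 * (𝐛₂ * Z)) = 𝐩 a1 a2 * (𝐛₁ * (𝐛₂ * Z)) := by
  rw [← mul_assoc, ← path_mul_b1, mul_assoc]

theorem b2_mul_path_mul_b1 (Z : 𝒜) : 𝐛₂ * (𝐩 a1 (a2 + a3) * (𝐛₁ * Z)) = 0 := by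
  rw [Nat.add_comm a2, path_add, mul_assoc, ← mul_assoc 𝐛₂, ← path_mul_b1, mul_assoc,
    b1_mul_path_mul_b1, mul_zero]

variable (k a1 a2 a3) in
def betaWords : Set (ℕ × 𝒜) :=
  {(a1, 𝐛₁), (a1 + a2, 𝐛₂), (a1, 𝐛₁ * 𝐛₂)}

variable (k a1 a2 a3) in
/-- A pair `(v, Y)` records a path `Y` ending at the vertex `v`, to be extended by the `α`-paths
starting at `v`. -/
def tails : Set (ℕ × 𝒜) :=
  (fun u => (u, 𝐞 u)) '' Iic (a1 + a2 + a3) ∪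
    image2 (fun (w : ℕ × 𝒜) (p : ℕ × ℕ) => (w.1, w.2 * (𝐩 p.1 p.2 * 𝐞 p.1)))
      (betaWords k a1 a2 a3) (Iic (a1 + a2 + a3) ×ˢ Iic (a1 + a2 + a3))

variable (k a1 a2 a3) in
def spanningSet : Set 𝒜 :=
  image2 (fun m (w : ℕ × 𝒜) => 𝐩 w.1 m * w.2) (Iic (a1 + a2 + a3)) (tails k a1 a2 a3)

local notation "𝒮" => Submodule.span k (spanningSet k a1 a2 a3)

theorem spanningSet_finite : (spanningSet k a1 a2 a3).Finite := by
  have hI := finite_Iic (a1 + a2 + a3)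
  have hβ : (betaWords k a1 a2 a3).Finite := by simp [betaWords]
  exact hI.image2 _ ((hI.image _).union (hβ.image2 _ (hI.prod hI)))

theorem mem_betaWords {v : ℕ} {w : 𝒜} :
    (v, w) ∈ betaWords k a1 a2 a3 ↔
      v = a1 ∧ w = 𝐛₁ ∨ v = a1 + a2 ∧ w = 𝐛₂ ∨ v = a1 ∧ w = 𝐛₁ * 𝐛₂ := by
  simp only [betaWords, mem_insert_iff, mem_singleton_iff, Prod.mk.injEq]

theorem mem_tails {v : ℕ} {Y : 𝒜} :
    (v, Y) ∈ tails k a1 a2 a3 ↔ v ≤ a1 + a2 + a3 ∧ Y = 𝐞 v ∨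
      ∃ w u r, (v, w) ∈ betaWords k a1 a2 a3 ∧ u ≤ a1 + a2 + a3 ∧ r ≤ a1 + a2 + a3 ∧
        Y = w * (𝐩 u r * 𝐞 u) := by
  simp only [tails, mem_union, mem_image, mem_image2, mem_prod, mem_Iic, Prod.mk.injEq,
    Prod.exists]
  constructor
  · rintro (⟨u, hu, rfl, rfl⟩ | ⟨v, w, hw, u, r, ⟨hu, hr⟩, rfl, rfl⟩)
    exacts [Or.inl ⟨hu, rfl⟩, Or.inr ⟨w, u, r, hw, hu, hr, rfl⟩]
  · rintro (⟨hv, rfl⟩ | ⟨w, u, r, hw, hu, hr, rfl⟩)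
    exacts [Or.inl ⟨v, hv, rfl, rfl⟩, Or.inr ⟨v, w, hw, u, r, ⟨hu, hr⟩, rfl, rfl⟩]

theorem e_mul_of_mem_tails {v : ℕ} {Y : 𝒜} (h : (v, Y) ∈ tails k a1 a2 a3) : 𝐞 v * Y = Y := by
  rcases mem_tails.1 h with ⟨-, rfl⟩ | ⟨w, u, r, hw, -, -, rfl⟩
  · rw [e_mul_e, if_pos rfl]
  · rw [← mul_assoc]
    congr 1
    rcases mem_betaWords.1 hw with ⟨rfl, rfl⟩ | ⟨rfl, rfl⟩ | ⟨rfl, rfl⟩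
    exacts [e_mul_b1, e_mul_b2, by rw [← mul_assoc, e_mul_b1]]

theorem path_mul_mem_span {m v : ℕ} {Y : 𝒜} (hm : m ≤ a1 + a2 + a3)
    (h : (v, Y) ∈ tails k a1 a2 a3) : 𝐩 v m * Y ∈ 𝒮 :=
  Submodule.subset_span (mem_image2_of_mem (mem_Iic.2 hm) h)

theorem mem_span_of_mem_tails {v : ℕ} {Y : 𝒜} (h : (v, Y) ∈ tails k a1 a2 a3) : Y ∈ 𝒮 := by
  simpa only [path_zero, one_mul] using path_mul_mem_span (Nat.zero_le _) h

theorem one_mem_span : (1 : 𝒜) ∈ 𝒮 := by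
  rw [← sum_e_eq_one]
  refine Submodule.sum_mem _ fun i hi => mem_span_of_mem_tails (mem_tails.2 (Or.inl ⟨?_, rfl⟩))
  exact (Finset.mem_Icc.1 hi).2

theorem e_mul_mem_span (j : ℕ) {s : 𝒜} (hs : s ∈ spanningSet k a1 a2 a3) : 𝐞 j * s ∈ 𝒮 := by
  obtain ⟨m, hm, ⟨v, Y⟩, hY, rfl⟩ := hs
  dsimp only
  rw [e_mul_path_mul (e_mul_of_mem_tails hY)]
  split_ifs
  exacts [path_mul_mem_span hm hY, zero_mem _]

theorem a_mul_mem_span (j : ℕ) {s : 𝒜} (hs : s ∈ spanningSet k a1 a2 a3) : 𝛂 j * s ∈ 𝒮 := by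
  obtain ⟨m, hm, ⟨v, Y⟩, hY, rfl⟩ := hs
  dsimp only
  by_cases hj : 1 ≤ j ∧ j + 1 ≤ a1 + a2 + a3
  · rw [a_mul_path_mul (e_mul_of_mem_tails hY)]
    split_ifs with hjv
    exacts [path_mul_mem_span (by omega) hY, zero_mem _]
  · rw [a_eq_zero hj, zero_mul]
    exact zero_mem _

theorem b1_mul_mem_span {s : 𝒜} (hs : s ∈ spanningSet k a1 a2 a3) : 𝐛₁ * s ∈ 𝒮 := by
  obtain ⟨m, hm, ⟨v, Y⟩, hY, rfl⟩ := hs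
  dsimp only
  by_cases hvm : v + m = a1 + a2
  swap
  · rw [b1_mul_path_mul_of_ne (e_mul_of_mem_tails hY) hvm]
    exact zero_mem _
  rcases mem_tails.1 hY with ⟨hv, rfl⟩ | ⟨w, u, r, hw, hu, hr, rfl⟩
  · exact mem_span_of_mem_tails (mem_tails.2 (Or.inr
      ⟨𝐛₁, v, m, mem_betaWords.2 (Or.inl ⟨rfl, rfl⟩), hv, hm, rfl⟩))
  rcases mem_betaWords.1 hw with ⟨rfl, rfl⟩ | ⟨rfl, rfl⟩ | ⟨rfl, rfl⟩
  · rw [show m = a2 by omega, b1_mul_path_mul_b1]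
    exact zero_mem _
  · rw [show m = 0 by omega, path_zero, one_mul, ← mul_assoc]
    exact mem_span_of_mem_tails (mem_tails.2 (Or.inr
      ⟨𝐛₁ * 𝐛₂, u, r, mem_betaWords.2 (Or.inr (Or.inr ⟨rfl, rfl⟩)), hu, hr, rfl⟩))
  · rw [show m = a2 by omega, mul_assoc, b1_mul_path_mul_b1]
    exact zero_mem _

theorem b2_mul_mem_span {s : 𝒜} (hs : s ∈ spanningSet k a1 a2 a3) : 𝐛₂ * s ∈ 𝒮 := by
  obtain ⟨m, hm, ⟨v, Y⟩, hY, rfl⟩ := hs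
  dsimp only
  by_cases hvm : v + m = a1 + a2 + a3
  swap
  · rw [b2_mul_path_mul_of_ne (e_mul_of_mem_tails hY) hvm]
    exact zero_mem _
  rcases mem_tails.1 hY with ⟨hv, rfl⟩ | ⟨w, u, r, hw, hu, hr, rfl⟩
  · exact mem_span_of_mem_tails (mem_tails.2 (Or.inr
      ⟨𝐛₂, v, m, mem_betaWords.2 (Or.inr (Or.inl ⟨rfl, rfl⟩)), hv, hm, rfl⟩))
  rcases mem_betaWords.1 hw with ⟨rfl, rfl⟩ | ⟨rfl, rfl⟩ | ⟨rfl, rfl⟩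
  · rw [show m = a2 + a3 by omega, b2_mul_path_mul_b1]
    exact zero_mem _
  · rw [show m = a3 by omega, b2_mul_path_mul_b2, ← mul_assoc 𝐛₁]
    exact path_mul_mem_span (by omega) (mem_tails.2 (Or.inr
      ⟨𝐛₁ * 𝐛₂, u, r, mem_betaWords.2 (Or.inr (Or.inr ⟨rfl, rfl⟩)), hu, hr, rfl⟩))
  · rw [show m = a2 + a3 by omega, mul_assoc, b2_mul_path_mul_b1]
    exact zero_mem _

theorem span_spanningSet_eq_top : 𝒮 = ⊤ := by
  refine Submodule.span_eq_top_of_mul_mem (RingQuot.adjoin_range_mkAlgHom_ι _) one_mem_span ?_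
  rintro _ ⟨g, rfl⟩ s hs
  cases g with
  | e j => exact e_mul_mem_span j hs
  | a j => exact a_mul_mem_span j hs
  | b1 => exact b1_mul_mem_span hs
  | b2 => exact b2_mul_mem_span hs

end MetabelianAlgebra

theorem stmt18_general (k : Type) [Field k] (a1 a2 a3 : ℕ) :
    FiniteDimensional k (RingQuot (PRel k a1 a2 a3)) := by
  exact Module.finite_def.2 (Submodule.fg_def.2
    ⟨_, MetabelianAlgebra.spanningSet_finite, MetabelianAlgebra.span_spanningSet_eq_top⟩)

/-- The algebra `A(a) = kQ(a)/I` is finite-dimensional over `k`. -/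
theorem stmt18 (k : Type) [Field k] (a1 a2 a3 : ℕ)
    (h1 : 1 ≤ a1) (h2 : 1 ≤ a2) (h3 : 1 ≤ a3) :
    FiniteDimensional k (RingQuot (PRel k a1 a2 a3)) :=
  stmt18_general k a1 a2 a3
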